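/- arXiv:1403.2898 — 2 statements merged into one kernel-verified Lean document; each statement's English description precedes it below -/
import Mathlib

section
/- Let f : X → G(Z,C) be radially C⁻-semistrictly quasiconvex at x₀ ∈ dom f. Then the set A(f,x₀) ∪ {x₀}, where A(f,x₀) = {x ∈ X | f(x) ⊄ f(x₀)}, is star-shaped at x₀. -/
open Set Pointwise

variable {X Z : Type*}

/-- Scalarization of a set `A ⊆ Z` with respect to `z*`: `inf {-z*(z) | z ∈ A}`. -/
noncomputable def scalSet [AddCommGroup Z] [Module ℝ Z] [TopologicalSpace Z]
    (zs : Z →L[ℝ] ℝ) (A : Set Z) : EReal :=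
  sInf ((fun z : Z => ((-(zs z) : ℝ) : EReal)) '' A)

/-- Semistrict quasiconvexity of an extended-real-valued function on `ℝ`. -/
def SSQCone (ψ : ℝ → EReal) : Prop :=
  ∀ s t : ℝ, ψ s ≠ ⊤ → ψ t ≠ ⊤ → ψ s ≠ ψ t →
    ∀ l ∈ Set.Ioo (0 : ℝ) 1, ψ (s + l * (t - s)) < max (ψ s) (ψ t)

/-! If `f x ⊄ f x₀`, separating a point of `f x \ f x₀` from the closed convex set
`f x₀ = cl co (f x₀ + C)` gives a functional `z* ∈ C⁻ \ {0}` with `φ_{f,z*}(x) < φ_{f,z*}(x₀)`.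
Semistrict quasiconvexity of `φ_{f,z*}` along the segment `[x₀, x]` then yields
`φ_{f,z*}(x_t) < φ_{f,z*}(x₀)` at every intermediate point `x_t`, and since `φ_{f,z*}` is
antitone in the set, `f x_t ⊄ f x₀`. -/

theorem SSQCone.lt_of_lt {ψ : ℝ → EReal} (hψ : SSQCone ψ) {s t : ℝ} (hs : ψ s ≠ ⊤)
    (ht : ψ t ≠ ⊤) (hlt : ψ s < ψ t) {l : ℝ} (hl : l ∈ Ioo (0 : ℝ) 1) :
    ψ (s + l * (t - s)) < ψ t := by
  simpa only [max_eq_right hlt.le] using hψ s t hs ht hlt.ne l hl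

section Scalarization

variable [AddCommGroup Z] [Module ℝ Z] [TopologicalSpace Z] {zs : Z →L[ℝ] ℝ} {A B : Set Z}

theorem scalSet_le_of_mem {z : Z} (hz : z ∈ A) : scalSet zs A ≤ ((-zs z : ℝ) : EReal) :=
  sInf_le ⟨z, hz, rfl⟩

theorem le_scalSet {u : ℝ} (h : ∀ z ∈ A, u ≤ -zs z) : (u : EReal) ≤ scalSet zs A :=
  le_sInf <| by
    rintro _ ⟨z, hz, rfl⟩
    exact EReal.coe_le_coe_iff.mpr (h z hz)

theorem scalSet_anti (h : A ⊆ B) : scalSet zs B ≤ scalSet zs A :=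
  sInf_le_sInf (image_mono h)

theorem scalSet_ne_top (hA : A.Nonempty) : scalSet zs A ≠ ⊤ :=
  ne_top_of_le_ne_top (EReal.coe_ne_top _) (scalSet_le_of_mem hA.some_mem)

end Scalarization

theorem LinearMap.nonneg_on_cone_of_bddBelow {C S : Set Z} [AddCommGroup Z] [Module ℝ Z]
    (g : Z →ₗ[ℝ] ℝ) (hCcone : ∀ c ∈ C, ∀ t : ℝ, 0 < t → t • c ∈ C) (hS : S.Nonempty)
    (hSC : S + C ⊆ S) {u : ℝ} (hu : ∀ w ∈ S, u ≤ g w) : ∀ c ∈ C, 0 ≤ g c := by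
  intro c hc
  by_contra! hneg
  obtain ⟨w, hw⟩ := hS
  set s := (g w - u + 1) / -g c
  have hs : 0 < s := div_pos (by linarith [hu w hw]) (by linarith)
  have hmem : w + s • c ∈ S := hSC (add_mem_add hw (hCcone c hc s hs))
  have hval : g (w + s • c) = u - 1 := by
    have : g c ≠ 0 := hneg.ne
    simp only [map_add, map_smul, smul_eq_mul, s]
    field_simp
    ring
  linarith [hu _ hmem]

section Separation

variable [AddCommGroup Z] [Module ℝ Z] [TopologicalSpace Z] [IsTopologicalAddGroup Z]
  [ContinuousSMul ℝ Z] [LocallyConvexSpace ℝ Z]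

theorem exists_scalSet_lt_of_not_subset {C S T : Set Z}
    (hCcone : ∀ c ∈ C, ∀ t : ℝ, 0 < t → t • c ∈ C) (hSclosed : IsClosed S)
    (hSconv : Convex ℝ S) (hS : S.Nonempty) (hSC : S + C ⊆ S) (hTS : ¬ T ⊆ S) :
    ∃ zs : Z →L[ℝ] ℝ, (∀ c ∈ C, zs c ≤ 0) ∧ zs ≠ 0 ∧ scalSet zs T < scalSet zs S := by
  obtain ⟨z, hzT, hzS⟩ := not_subset.mp hTS
  obtain ⟨g, u, hgz, hgS⟩ := geometric_hahn_banach_point_closed hSconv hSclosed hzS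
  have hgC := (g : Z →ₗ[ℝ] ℝ).nonneg_on_cone_of_bddBelow hCcone hS hSC fun w hw => (hgS w hw).le
  refine ⟨-g, fun c hc => by simpa using hgC c hc, ?_, ?_⟩
  · obtain ⟨w, hw⟩ := hS
    intro h
    have hgw := hgS w hw
    simp only [neg_eq_zero] at h
    simp [h] at hgz hgw
    linarith
  · calc scalSet (-g) T ≤ ((g z : ℝ) : EReal) := by simpa using scalSet_le_of_mem (zs := -g) hzT
      _ < (u : EReal) := EReal.coe_lt_coe_iff.mpr hgz
      _ ≤ scalSet (-g) S := le_scalSet fun w hw => by simpa using (hgS w hw).le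

end Separation

theorem scalSet_radial_lt [AddCommGroup X] [Module ℝ X] [AddCommGroup Z] [Module ℝ Z]
    [TopologicalSpace Z] {f : X → Set Z} {zs : Z →L[ℝ] ℝ} {x₀ x : X}
    (hψ : SSQCone fun t : ℝ =>
      if t ∈ Icc (0 : ℝ) 1 then scalSet zs (f (x₀ + t • (x - x₀))) else ⊤)
    (hx₀ : (f x₀).Nonempty) (hx : scalSet zs (f x) < scalSet zs (f x₀)) {t : ℝ}
    (ht : t ∈ Ioo (0 : ℝ) 1) :
    scalSet zs (f (x₀ + t • (x - x₀))) < scalSet zs (f x₀) := by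
  have hψ1 : (if (1 : ℝ) ∈ Icc (0 : ℝ) 1 then scalSet zs (f (x₀ + (1 : ℝ) • (x - x₀))) else ⊤)
      = scalSet zs (f x) := by simp
  have hψ0 : (if (0 : ℝ) ∈ Icc (0 : ℝ) 1 then scalSet zs (f (x₀ + (0 : ℝ) • (x - x₀))) else ⊤)
      = scalSet zs (f x₀) := by simp
  have key := hψ.lt_of_lt (s := 1) (t := 0) (by rw [hψ1]; exact hx.ne_top)
    (by rw [hψ0]; exact scalSet_ne_top hx₀) (by rw [hψ1, hψ0]; exact hx)
    (l := 1 - t) ⟨by linarith [ht.2], by linarith [ht.1]⟩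
  rwa [show (1 : ℝ) + (1 - t) * (0 - 1) = t by ring, hψ0, if_pos (Ioo_subset_Icc_self ht)] at key

theorem A_starShaped_general
    [AddCommGroup X] [Module ℝ X]
    [AddCommGroup Z] [Module ℝ Z] [TopologicalSpace Z]
    [IsTopologicalAddGroup Z] [ContinuousSMul ℝ Z] [LocallyConvexSpace ℝ Z]
    (C : Set Z)
    (hCcone : ∀ c ∈ C, ∀ t : ℝ, 0 < t → t • c ∈ C)
    (f : X → Set Z) (hf : ∀ x : X, f x = closure (convexHull ℝ (f x + C)))
    (x₀ : X) (hx₀ : f x₀ ≠ ∅)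
    (hssq : ∀ zs : Z →L[ℝ] ℝ, (∀ c ∈ C, zs c ≤ 0) → zs ≠ 0 → ∀ b : X,
      SSQCone (fun t : ℝ =>
        if t ∈ Set.Icc (0 : ℝ) 1 then scalSet zs (f (x₀ + t • (b - x₀))) else ⊤)) :
    ∀ x ∈ ({y : X | ¬ f y ⊆ f x₀} ∪ {x₀} : Set X), ∀ t ∈ Set.Icc (0 : ℝ) 1,
      x₀ + t • (x - x₀) ∈ ({y : X | ¬ f y ⊆ f x₀} ∪ {x₀} : Set X) := by
  rintro x (hx | rfl) t ht
  · rcases ht.1.eq_or_lt with rfl | ht0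
    · simp
    rcases ht.2.eq_or_lt with rfl | ht1
    · simpa using Or.inr hx
    have hclosed : IsClosed (f x₀) := by rw [hf]; exact isClosed_closure
    have hconv : Convex ℝ (f x₀) := by rw [hf]; exact (convex_convexHull ℝ _).closure
    have hadd : f x₀ + C ⊆ f x₀ := by
      conv_rhs => rw [hf]
      exact (subset_convexHull ℝ _).trans subset_closure
    have hne := nonempty_iff_ne_empty.mpr hx₀
    obtain ⟨zs, hzsC, hzs0, hlt⟩ :=
      exists_scalSet_lt_of_not_subset hCcone hclosed hconv hne hadd hx
    exact Or.inl fun hsub => (scalSet_radial_lt (hssq zs hzsC hzs0 x) hne hlt ⟨ht0, ht1⟩).not_ge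
      (scalSet_anti hsub)
  · simp

/-- If `f : X → G(Z,C)` is radially `C⁻`-semistrictly quasiconvex at `x₀ ∈ dom f`, then
`A(f,x₀) ∪ {x₀}` is star-shaped at `x₀`, where `A(f,x₀) = {x | f(x) ⊄ f(x₀)}`. -/
theorem A_starShaped
    [AddCommGroup X] [Module ℝ X]
    [AddCommGroup Z] [Module ℝ Z] [TopologicalSpace Z]
    [IsTopologicalAddGroup Z] [ContinuousSMul ℝ Z] [LocallyConvexSpace ℝ Z]
    (C : Set Z) (hCclosed : IsClosed C) (hCconv : Convex ℝ C) (hC0 : (0 : Z) ∈ C)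
    (hCcone : ∀ c ∈ C, ∀ t : ℝ, 0 < t → t • c ∈ C)
    (f : X → Set Z) (hf : ∀ x : X, f x = closure (convexHull ℝ (f x + C)))
    (x₀ : X) (hx₀ : f x₀ ≠ ∅)
    (hssq : ∀ zs : Z →L[ℝ] ℝ, (∀ c ∈ C, zs c ≤ 0) → zs ≠ 0 → ∀ b : X,
      SSQCone (fun t : ℝ =>
        if t ∈ Set.Icc (0 : ℝ) 1 then scalSet zs (f (x₀ + t • (b - x₀))) else ⊤)) :
    ∀ x ∈ ({y : X | ¬ f y ⊆ f x₀} ∪ {x₀} : Set X), ∀ t ∈ Set.Icc (0 : ℝ) 1,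
      x₀ + t • (x - x₀) ∈ ({y : X | ¬ f y ⊆ f x₀} ∪ {x₀} : Set X) :=
  A_starShaped_general C hCcone f hf x₀ hx₀ hssq
end

section
/- Let f : X → G(Z,C), M ⊆ dom f nonempty, and z* ∈ C⁻ \ {0}. If the scalarization φ_{f,z*} satisfies the inequality φ_{f,z*}(x₀ + t(x - x₀)) ≤ max{φ_{f,z*}(x₀), φ_{f,z*}(x)} for all x ∈ X, t ∈ (0,1), and all x₀ ∈ co M, then the inf-translated scalarization ψ(x) = inf_{m ∈ co M} φ_{f,z*}(m + x) satisfies ψ(tx) ≤ max{ψ(0), ψ(x)} for all x ∈ X and t ∈ (0,1). -/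
/-!
For `m, m' ∈ co M` the point `(1 - t) • m + t • m' ∈ co M`, translated by `t • x`, lies on the
segment from `m` to `m' + x`, so `ψ (t • x) ≤ max (φ m) (φ (m' + x))`; taking the infimum over
`m` and `m'` separately gives `max (ψ 0) (ψ x)`, since `max` distributes over infima.
-/

open Set Pointwise

variable {X Z : Type*}

theorem Convex.iInf_add_smul_le_max {E β : Type*} [AddCommGroup E] [Module ℝ E]
    [CompleteLinearOrder β] {S : Set E} (hS : Convex ℝ S) (φ : E → β)
    (hq : ∀ x₀ ∈ S, ∀ y : E, ∀ t ∈ Ioo (0 : ℝ) 1, φ (x₀ + t • (y - x₀)) ≤ max (φ x₀) (φ y))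
    (x : E) {t : ℝ} (ht : t ∈ Ioo (0 : ℝ) 1) :
    ⨅ m ∈ S, φ (m + t • x) ≤ max (⨅ m ∈ S, φ m) (⨅ m ∈ S, φ (m + x)) := by
  rw [iInf₂_sup_eq]
  refine le_iInf₂ fun m hm => ?_
  rw [sup_iInf₂_eq]
  refine le_iInf₂ fun m' hm' => ?_
  have hmem : (1 - t) • m + t • m' ∈ S := hS hm hm' (by linarith [ht.2]) ht.1.le (by ring)
  have hseg : m + t • ((m' + x) - m) = (1 - t) • m + t • m' + t • x := by module
  calc ⨅ m ∈ S, φ (m + t • x) ≤ φ ((1 - t) • m + t • m' + t • x) := iInf₂_le _ hmem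
    _ = φ (m + t • ((m' + x) - m)) := by rw [hseg]
    _ ≤ max (φ m) (φ (m' + x)) := hq m hm (m' + x) t ht

theorem infTranslation_quasiconvex_at_zero_general
    [AddCommGroup X] [Module ℝ X]
    [AddCommGroup Z] [Module ℝ Z] [TopologicalSpace Z]
    (f : X → Set Z)
    (M : Set X)
    (zs : Z →L[ℝ] ℝ)
    (hq : ∀ x₀ ∈ convexHull ℝ M, ∀ x : X, ∀ t ∈ Set.Ioo (0 : ℝ) 1,
      scalSet zs (f (x₀ + t • (x - x₀))) ≤
        max (scalSet zs (f x₀)) (scalSet zs (f x))) :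
    ∀ x : X, ∀ t ∈ Set.Ioo (0 : ℝ) 1,
      sInf ((fun m : X => scalSet zs (f (m + t • x))) '' convexHull ℝ M) ≤
        max (sInf ((fun m : X => scalSet zs (f (m + (0 : X)))) '' convexHull ℝ M))
            (sInf ((fun m : X => scalSet zs (f (m + x))) '' convexHull ℝ M)) := by
  intro x t ht
  simp only [sInf_image, add_zero]
  exact (convex_convexHull ℝ M).iInf_add_smul_le_max (fun y => scalSet zs (f y)) hq x ht

/-- If the scalarization `φ = φ_{f,z*}` satisfies the quasiconvexity inequality at every
`x₀ ∈ co M`, then the inf-translated scalarization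
`ψ(x) = inf_{m ∈ co M} φ(m + x)` satisfies `ψ(t x) ≤ max{ψ(0), ψ(x)}`. -/
theorem infTranslation_quasiconvex_at_zero
    [AddCommGroup X] [Module ℝ X]
    [AddCommGroup Z] [Module ℝ Z] [TopologicalSpace Z]
    [IsTopologicalAddGroup Z] [ContinuousSMul ℝ Z]
    (C : Set Z) (hCclosed : IsClosed C) (hCconv : Convex ℝ C) (hC0 : (0 : Z) ∈ C)
    (hCcone : ∀ c ∈ C, ∀ t : ℝ, 0 < t → t • c ∈ C)
    (f : X → Set Z) (hf : ∀ x : X, f x = closure (convexHull ℝ (f x + C)))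
    (M : Set X) (hMne : M.Nonempty) (hMdom : ∀ m ∈ M, f m ≠ ∅)
    (zs : Z →L[ℝ] ℝ) (hzs : ∀ c ∈ C, zs c ≤ 0) (hzs0 : zs ≠ 0)
    (hq : ∀ x₀ ∈ convexHull ℝ M, ∀ x : X, ∀ t ∈ Set.Ioo (0 : ℝ) 1,
      scalSet zs (f (x₀ + t • (x - x₀))) ≤
        max (scalSet zs (f x₀)) (scalSet zs (f x))) :
    ∀ x : X, ∀ t ∈ Set.Ioo (0 : ℝ) 1,
      sInf ((fun m : X => scalSet zs (f (m + t • x))) '' convexHull ℝ M) ≤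
        max (sInf ((fun m : X => scalSet zs (f (m + (0 : X)))) '' convexHull ℝ M))
            (sInf ((fun m : X => scalSet zs (f (m + x))) '' convexHull ℝ M)) :=
  infTranslation_quasiconvex_at_zero_general f M zs hq
end
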